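/- Let $a_1 \ge a_2 \ge a_3 > 0$ with $a_1 < 1$, $a_1 + a_3 = 10/9$, and $a_2 = a_3$. Define $S = \sin(\pi a_3)\cos(\pi a_1) + 2\sin(\pi a_1)\cos(\pi a_3)$. Then $S < 0$ and consequently $\sin(\pi a_3)\sin(\pi a_1) \cdot \pi S \le 0$, i.e., the boundary term in the integration by parts $\int (f')^2 = \pi^2 \int f^2 + [\text{boundary}]$ for the star test function is nonpositive. -/

import Mathlib

/-!
Writing `x = π a₁`, `y = π a₃`, the addition formulas give
`2 S = 3 sin (x + y) + sin (x - y)`. Since `x + y = π + π/9`, the first term is `-3 sin (π/9)`,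
and `sin (π/9) > 1/3` (from `sin t > t - t³/6`) makes it beat `sin (x - y) ≤ 1`. The product
`sin x * sin y` is positive because `a₃ ≤ a₁ < 1` and `a₁ + a₃ = 10/9` put both angles in `(0, π)`.
-/

open Real

lemma one_third_lt_sin_pi_div_nine : (1 : ℝ) / 3 < sin (π / 9) := by
  have hpi_gt : (3.141592 : ℝ) < π := pi_gt_d6
  have hcube := sin_gt_sub_cube (x := π / 9) (by positivity)
  nlinarith [pi_lt_d2, sq_nonneg (π / 9)]

lemma two_mul_sin_mul_cos_add_two_mul_sin_mul_cos (x y : ℝ) :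
    2 * (sin y * cos x + 2 * sin x * cos y) = 3 * sin (x + y) + sin (x - y) := by
  rw [sin_add, sin_sub]
  ring

lemma sin_mul_cos_add_two_mul_sin_mul_cos_neg {x y : ℝ} (h : sin (x + y) < -(1 / 3)) :
    sin y * cos x + 2 * sin x * cos y < 0 := by
  have := two_mul_sin_mul_cos_add_two_mul_sin_mul_cos x y
  linarith [sin_le_one (x - y)]

lemma sin_pi_add_pi_div_nine_lt : sin (π + π / 9) < -(1 / 3) := by
  rw [sin_add, sin_pi, cos_pi]
  linarith [one_third_lt_sin_pi_div_nine]

lemma sin_pi_mul_pos {a : ℝ} (h0 : 0 < a) (h1 : a < 1) : 0 < sin (π * a) :=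
  sin_pos_of_pos_of_lt_pi (by positivity) (by nlinarith [pi_pos])

theorem stmt_19_general (a₁ a₂ a₃ : ℝ) (h23 : a₃ ≤ a₂) (h12 : a₂ ≤ a₁)
    (ha1 : a₁ < 1) (hsum : a₁ + a₃ = 10 / 9)
    (S : ℝ) (hS : S = sin (π * a₃) * cos (π * a₁) + 2 * sin (π * a₁) * cos (π * a₃)) :
    S < 0 ∧ sin (π * a₃) * sin (π * a₁) * (π * S) ≤ 0 := by
  have hangle : π * a₁ + π * a₃ = π + π / 9 := by
    rw [← mul_add, hsum]
    ring
  have hS_neg : S < 0 := hS ▸ sin_mul_cos_add_two_mul_sin_mul_cos_neg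
    (hangle ▸ sin_pi_add_pi_div_nine_lt)
  have hsin₃ : 0 < sin (π * a₃) := sin_pi_mul_pos (by linarith) (by linarith)
  have hsin₁ : 0 < sin (π * a₁) := sin_pi_mul_pos (by linarith) ha1
  exact ⟨hS_neg, (mul_neg_of_pos_of_neg (mul_pos hsin₃ hsin₁)
    (mul_neg_of_pos_of_neg pi_pos hS_neg)).le⟩

theorem stmt_19 (a₁ a₂ a₃ : ℝ) (h32 : 0 < a₃) (h23 : a₃ ≤ a₂) (h12 : a₂ ≤ a₁)
    (ha1 : a₁ < 1) (hsum : a₁ + a₃ = 10 / 9) (heq : a₂ = a₃)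
    (S : ℝ) (hS : S = sin (π * a₃) * cos (π * a₁) + 2 * sin (π * a₁) * cos (π * a₃)) :
    S < 0 ∧ sin (π * a₃) * sin (π * a₁) * (π * S) ≤ 0 :=
  stmt_19_general a₁ a₂ a₃ h23 h12 ha1 hsum S hS
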